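/- arXiv:2203.02968 — 7 statements merged into one kernel-verified Lean document; each statement's English description precedes it below -/
import Mathlib

section
/- For every deterministic decision tree T, the guessing complexity of T equals its rank: G(T) = rank(T). -/
/-- A deterministic decision tree over `{0,1}^n`: every internal node is labeled
by a query index `i ∈ Fin n` and has exactly two children (a 0-child and a
1-child); every leaf is labeled by an output value. -/
inductive DTree (n : ℕ) : Type where
  | leaf (b : Bool) : DTree n
  | node (i : Fin n) (t0 t1 : DTree n) : DTree n

namespace DTree

/-- On input `x`, from each internal node labeled `i` follow the edge to the
`x i`-child; output the label of the leaf reached. -/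
def eval {n : ℕ} : DTree n → (Fin n → Bool) → Bool
  | leaf b, _ => b
  | node i t0 t1, x => if x i then t1.eval x else t0.eval x

/-- `DTSize`: the total number of nodes of the tree. -/
def size {n : ℕ} : DTree n → ℕ
  | leaf _ => 1
  | node _ t0 t1 => 1 + t0.size + t1.size

/-- The depth: the maximum number of edges on a root-to-leaf path. -/
def depth {n : ℕ} : DTree n → ℕ
  | leaf _ => 0
  | node _ t0 t1 => 1 + max t0.depth t1.depth

/-- The rank of a binary tree: a leaf has rank 0; an internal node whose two
children have ranks `r₁, r₂` has rank `max r₁ r₂` if `r₁ ≠ r₂`, and `r₁ + 1`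
if `r₁ = r₂`. -/
def rank {n : ℕ} : DTree n → ℕ
  | leaf _ => 0
  | node _ t0 t1 => if t0.rank = t1.rank then t0.rank + 1 else max t0.rank t1.rank

end DTree

/-- The decision tree `t` computes the total Boolean function `f`. -/
def ComputesFn {n : ℕ} (t : DTree n) (f : (Fin n → Bool) → Bool) : Prop :=
  ∀ x, t.eval x = f x

/-- A two-coloring (black/red) of the edges of a binary tree, recorded as a tree
of the same shape: `black0`/`black1` record whether the edge to the 0 child / 1 child
is colored black (`true`) or red (`false`). -/
inductive GColoring : Type where
  | leaf : GColoring
  | node (black0 black1 : Bool) (c0 c1 : GColoring) : GColoring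

namespace GColoring

/-- A G-coloring: every internal node has at most one outgoing black edge. -/
def Valid : GColoring → Prop
  | leaf => True
  | node b0 b1 c0 c1 => ¬(b0 = true ∧ b1 = true) ∧ c0.Valid ∧ c1.Valid

/-- The maximum number of red edges on a root-to-leaf path. -/
def maxRed : GColoring → ℕ
  | leaf => 0
  | node b0 b1 c0 c1 =>
      max ((if b0 then 0 else 1) + c0.maxRed) ((if b1 then 0 else 1) + c1.maxRed)

end GColoring

/-- The coloring `c` has the same shape as the decision tree `t`
(i.e. it is a coloring of the edges of `t`). -/
def MatchesG {n : ℕ} : DTree n → GColoring → Prop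
  | DTree.leaf _, GColoring.leaf => True
  | DTree.node _ t0 t1, GColoring.node _ _ c0 c1 => MatchesG t0 c0 ∧ MatchesG t1 c1
  | _, _ => False

/-- The guessing complexity `G(T)`: the minimum, over all G-colorings of `T`, of
the maximum number of red edges on a root-to-leaf path of `T`. -/
noncomputable def guessingComplexity {n : ℕ} (t : DTree n) : ℕ :=
  sInf {k : ℕ | ∃ c : GColoring, MatchesG t c ∧ c.Valid ∧ c.maxRed = k}

/-!
Colouring black, at every node, the edge towards a child of maximal rank leaves a red edge
only where the two children have equal rank, i.e. exactly where the rank grows, so this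
colouring has `rank T` red edges on its worst path. Conversely, at a node whose children
have equal rank `r`, at least one outgoing edge is red, so by induction some path below it
carries `r + 1` red edges.
-/

namespace DTree

variable {n : ℕ}

def rankColoring : DTree n → GColoring
  | leaf _ => GColoring.leaf
  | node _ t0 t1 =>
      GColoring.node (decide (t1.rank ≤ t0.rank)) (decide (t0.rank < t1.rank))
        t0.rankColoring t1.rankColoring

theorem matchesG_rankColoring (t : DTree n) : MatchesG t t.rankColoring := by
  induction t with
  | leaf => trivial
  | node _ _ _ ih0 ih1 => exact ⟨ih0, ih1⟩

theorem valid_rankColoring (t : DTree n) : t.rankColoring.Valid := by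
  induction t with
  | leaf => trivial
  | node _ t0 t1 ih0 ih1 =>
    refine ⟨?_, ih0, ih1⟩
    simp only [decide_eq_true_eq]
    omega

theorem maxRed_rankColoring (t : DTree n) : t.rankColoring.maxRed = t.rank := by
  induction t with
  | leaf => rfl
  | node _ t0 t1 ih0 ih1 =>
    simp only [rankColoring, GColoring.maxRed, rank, ih0, ih1]
    grind

theorem rank_le_maxRed {t : DTree n} {c : GColoring} (hm : MatchesG t c) (hv : c.Valid) :
    t.rank ≤ c.maxRed := by
  induction t generalizing c with
  | leaf => exact Nat.zero_le _
  | node _ t0 t1 ih0 ih1 =>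
    cases c with
    | leaf => exact hm.elim
    | node b0 b1 c0 c1 =>
      obtain ⟨hm0, hm1⟩ := hm
      obtain ⟨hb, hv0, hv1⟩ := hv
      have h0 := ih0 hm0 hv0
      have h1 := ih1 hm1 hv1
      simp only [rank, GColoring.maxRed]
      grind

theorem isLeast_rank (t : DTree n) :
    IsLeast {k : ℕ | ∃ c : GColoring, MatchesG t c ∧ c.Valid ∧ c.maxRed = k} t.rank :=
  ⟨⟨t.rankColoring, t.matchesG_rankColoring, t.valid_rankColoring, t.maxRed_rankColoring⟩,
    fun _ ⟨_, hm, hv, hk⟩ => hk ▸ rank_le_maxRed hm hv⟩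

end DTree

/-- For every deterministic decision tree `T`, the guessing
complexity of `T` equals its rank: `G(T) = rank(T)`. -/
theorem guessingComplexity_eq_rank {n : ℕ} (t : DTree n) :
    guessingComplexity t = t.rank :=
  t.isLeast_rank.csInf_eq
end

section
/- Let n be a positive integer divisible by 3 and let f be the partial Approximate-Majority function on {0,1}^n, defined by f(x) = 0 if the Hamming weight |x| ≤ n/3 and f(x) = 1 if |x| ≥ 2n/3 (and undefined otherwise). Then every deterministic decision tree computing f has rank at least n/3; consequently rank(f) ≥ n/3 (and rank(f) = Θ(n)). -/
/-- The Hamming weight `|x|` of `x ∈ {0,1}^n`. -/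
def hammingWeight {n : ℕ} (x : Fin n → Bool) : ℕ :=
  (Finset.univ.filter fun i => x i = true).card

/-!
Walk down the tree keeping a subcube `[x, y]` of inputs that all reach the current node. A query
to a fixed coordinate costs nothing; at a query to a free coordinate, fix it so as to enter the
child of smaller rank, whose rank is at least one less. The leaf reached thus has a subcube on
which at most `rank t` coordinates are fixed, so it contains an input of weight at most `rank t`
and one of weight at least `n - rank t`. If `rank t < n / 3`, the tree would have to output `0`
on the first and `1` on the second.
-/

open Function

section hammingWeight

variable {n : ℕ}

lemma hammingWeight_eq_sum_toNat (x : Fin n → Bool) : hammingWeight x = ∑ i, (x i).toNat := by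
  rw [hammingWeight, Finset.card_filter]
  exact Finset.sum_congr rfl fun i _ => by cases x i <;> rfl

lemma hammingWeight_update_add (x : Fin n → Bool) (i : Fin n) (b : Bool) :
    hammingWeight (update x i b) + (x i).toNat = hammingWeight x + b.toNat := by
  simp only [hammingWeight_eq_sum_toNat, Fintype.sum_eq_add_sum_compl i, update_self]
  rw [Finset.sum_congr rfl fun j hj => by rw [update_of_ne (by simpa using hj)]]
  ring

lemma hammingWeight_le (x : Fin n → Bool) : hammingWeight x ≤ n :=
  (Finset.card_filter_le _ _).trans_eq (Finset.card_fin n)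

@[simp] lemma hammingWeight_bot : hammingWeight (⊥ : Fin n → Bool) = 0 := by
  simp [hammingWeight]

@[simp] lemma hammingWeight_top : hammingWeight (⊤ : Fin n → Bool) = n := by
  simp [hammingWeight]

end hammingWeight

namespace DTree

variable {n : ℕ}

lemma eval_node_of_apply_eq {x : Fin n → Bool} {i : Fin n} {b : Bool} (h : x i = b)
    (t0 t1 : DTree n) : (node i t0 t1).eval x = (cond b t1 t0).eval x := by
  cases b <;> simp [eval, h]

lemma rank_le_rank_node_left (i : Fin n) (t0 t1 : DTree n) : t0.rank ≤ (node i t0 t1).rank := by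
  simp only [rank]; split <;> omega

lemma rank_le_rank_node_right (i : Fin n) (t0 t1 : DTree n) : t1.rank ≤ (node i t0 t1).rank := by
  simp only [rank]; split <;> omega

lemma min_rank_add_one_le_rank_node (i : Fin n) (t0 t1 : DTree n) :
    min t0.rank t1.rank + 1 ≤ (node i t0 t1).rank := by
  simp only [rank]; split <;> omega

/-- `hi.toNat - lo.toNat` is `1` exactly when the queried coordinate is still free: fixing it
must then be paid for by a drop in rank. -/
lemma exists_child_rank_add_le (i : Fin n) (t0 t1 : DTree n) {lo hi : Bool} (h : lo ≤ hi) :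
    ∃ b, lo ≤ b ∧ b ≤ hi ∧
      (cond b t1 t0).rank + hi.toNat ≤ (node i t0 t1).rank + lo.toNat := by
  have := min_rank_add_one_le_rank_node i t0 t1
  cases lo <;> cases hi
  · exact ⟨false, le_rfl, le_rfl, by simp [rank_le_rank_node_left]⟩
  · by_cases h01 : t0.rank ≤ t1.rank
    · refine ⟨false, le_rfl, Bool.false_le _, ?_⟩
      simp only [cond_false, Bool.toNat_true, Bool.toNat_false]; omega
    · refine ⟨true, Bool.false_le _, le_rfl, ?_⟩
      simp only [cond_true, Bool.toNat_true, Bool.toNat_false]; omega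
  · exact absurd h (by decide)
  · exact ⟨true, le_rfl, le_rfl, by simp [rank_le_rank_node_right]⟩

/-- The weight inequality says, without subtraction, that the number `w y - w x` of free
coordinates of the subcube drops by at most `t.rank`. -/
theorem exists_eval_eq_of_le (t : DTree n) {x y : Fin n → Bool} (hxy : x ≤ y) :
    ∃ x' y', x ≤ x' ∧ x' ≤ y' ∧ y' ≤ y ∧ t.eval x' = t.eval y' ∧
      hammingWeight x' + hammingWeight y ≤ hammingWeight x + hammingWeight y' + t.rank := by
  induction t generalizing x y with
  | leaf b => exact ⟨x, y, le_rfl, hxy, le_rfl, rfl, by simp [rank]⟩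
  | node i t0 t1 ih0 ih1 =>
    obtain ⟨b, hxb, hby, hrank⟩ := exists_child_rank_add_le i t0 t1 (hxy i)
    have ih : ∀ c : Bool, ∀ {x y : Fin n → Bool}, x ≤ y →
        ∃ x' y', x ≤ x' ∧ x' ≤ y' ∧ y' ≤ y ∧
          (cond c t1 t0).eval x' = (cond c t1 t0).eval y' ∧ hammingWeight x' + hammingWeight y ≤
            hammingWeight x + hammingWeight y' + (cond c t1 t0).rank := by
      intro c; cases c; exacts [ih0, ih1]
    obtain ⟨x', y', hx, hxy', hy, heval, hw⟩ := ih b (x := update x i b) (y := update y i b)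
      (update_le_update_iff.2 ⟨le_rfl, fun j _ => hxy j⟩)
    have hx'i : x' i = b := le_antisymm ((hxy' i).trans (by simpa using hy i)) (by simpa using hx i)
    have hy'i : y' i = b := le_antisymm (by simpa using hy i) (hx'i ▸ hxy' i)
    refine ⟨x', y', ?_, hxy', ?_, ?_, ?_⟩
    · exact (le_update_iff.2 ⟨hxb, fun j _ => le_rfl⟩).trans hx
    · exact hy.trans (update_le_iff.2 ⟨hby, fun j _ => le_rfl⟩)
    · rw [eval_node_of_apply_eq hx'i, eval_node_of_apply_eq hy'i, heval]
    · have := hammingWeight_update_add x i b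
      have := hammingWeight_update_add y i b
      omega

end DTree

theorem approxMaj_rank_lower_bound_general {n : ℕ}
    (t : DTree n)
    (hzero : ∀ x : Fin n → Bool, 3 * hammingWeight x ≤ n → t.eval x = false)
    (hone : ∀ x : Fin n → Bool, 2 * n ≤ 3 * hammingWeight x → t.eval x = true) :
    n / 3 ≤ t.rank := by
  obtain ⟨x, y, -, -, -, heval, hw⟩ :=
    t.exists_eval_eq_of_le (bot_le (a := (⊤ : Fin n → Bool)))
  rw [hammingWeight_bot, hammingWeight_top] at hw
  have hy := hammingWeight_le y
  by_contra! hrank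
  have hx0 := hzero x (by omega)
  have hy1 := hone y (by omega)
  exact Bool.false_ne_true (hx0.symm.trans (heval.trans hy1))

/-- For `n > 0` divisible by 3, every deterministic decision
tree computing the partial Approximate-Majority function on `{0,1}^n`
(output `0` if `|x| ≤ n/3`, output `1` if `|x| ≥ 2n/3`, undefined otherwise)
has rank at least `n/3`; consequently `rank(f) ≥ n/3`. -/
theorem approxMaj_rank_lower_bound {n : ℕ} (hn : 0 < n) (h3 : 3 ∣ n)
    (t : DTree n)
    (hzero : ∀ x : Fin n → Bool, 3 * hammingWeight x ≤ n → t.eval x = false)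
    (hone : ∀ x : Fin n → Bool, 2 * n ≤ 3 * hammingWeight x → t.eval x = true) :
    n / 3 ≤ t.rank :=
  approxMaj_rank_lower_bound_general t hzero hone
end

section
/- There is a universal constant c such that for every positive integer n divisible by 3, the partial Approximate-Majority function f on {0,1}^n (f(x) = 0 if |x| ≤ n/3, f(x) = 1 if |x| ≥ 2n/3, undefined otherwise) satisfies rrank(f) ≤ c; that is, its randomized rank is Θ(1). -/
/-!
Sample a coordinate `i` uniformly and output `x i`, i.e. use the rank-one tree that queries `i`
and returns the answer. It outputs `1` with probability `|x| / n`, which is at most `1/3` on the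
`0`-instances and at least `2/3` on the `1`-instances.
-/

open Finset

namespace DTree

def dictator {n : ℕ} (i : Fin n) : DTree n :=
  node i (leaf false) (leaf true)

@[simp]
theorem eval_dictator {n : ℕ} (i : Fin n) (x : Fin n → Bool) : (dictator i).eval x = x i := by
  cases h : x i <;> simp [dictator, eval, h]

@[simp]
theorem rank_dictator {n : ℕ} (i : Fin n) : (dictator i).rank = 1 := rfl

end DTree

theorem card_filter_eq_false_add_hammingWeight {n : ℕ} (x : Fin n → Bool) :
    #{i | x i = false} + hammingWeight x = n := by
  simpa [hammingWeight, add_comm] using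
    card_filter_add_card_filter_not (s := (univ : Finset (Fin n))) (fun i => x i = true)

/-- There is a universal constant `c` such that for every
`n > 0` divisible by 3, the partial Approximate-Majority function on `{0,1}^n`
has randomized rank at most `c`: there is a randomized decision tree (a finitely
supported probability distribution over deterministic decision trees) that, on
every input in the domain, outputs the correct value with probability at least
`2/3`, and every tree in its support has rank at most `c`. -/
theorem approxMaj_rrank_const :
    ∃ c : ℕ, ∀ n : ℕ, 0 < n → 3 ∣ n →
      ∃ (k : ℕ) (T : Fin k → DTree n) (p : Fin k → ℝ),
        (∀ i, 0 ≤ p i) ∧ (∑ i, p i = 1) ∧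
        (∀ x : Fin n → Bool, 3 * hammingWeight x ≤ n →
          (2 : ℝ) / 3 ≤ ∑ i ∈ Finset.univ.filter (fun i => (T i).eval x = false), p i) ∧
        (∀ x : Fin n → Bool, 2 * n ≤ 3 * hammingWeight x →
          (2 : ℝ) / 3 ≤ ∑ i ∈ Finset.univ.filter (fun i => (T i).eval x = true), p i) ∧
        (∀ i, (T i).rank ≤ c) := by
  refine ⟨1, fun n hn _ => ?_⟩
  have hn : (0 : ℝ) < n := by exact_mod_cast hn
  refine ⟨n, DTree.dictator, fun _ => 1 / n, fun _ => by positivity, ?_, ?_, ?_,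
    fun i => (DTree.rank_dictator i).le⟩
  · simp [field]
  · intro x hx
    have hsplit : (#{i | x i = false} : ℝ) + hammingWeight x = n := by
      exact_mod_cast card_filter_eq_false_add_hammingWeight x
    have hx : 3 * (hammingWeight x : ℝ) ≤ n := by exact_mod_cast hx
    simp only [DTree.eval_dictator, sum_const, nsmul_eq_mul, mul_one_div]
    rw [le_div_iff₀ hn]
    linarith
  · intro x hx
    have hx : 2 * (n : ℝ) ≤ 3 * hammingWeight x := by exact_mod_cast hx
    simp only [DTree.eval_dictator, sum_const, nsmul_eq_mul, mul_one_div]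
    rw [le_div_iff₀ hn, ← hammingWeight]
    linarith
end

section
/- For every n = 4^k (k ≥ 1), there exists a deterministic decision tree computing the complete binary AND-OR tree function F : {0,1}^n → {0,1} whose rank is at most (n+2)/3; i.e., rank(F) ≤ (n+2)/3. -/
/-- The complete binary formula of depth `d` on `2^d` distinct variables whose
gate layers alternate; the root gate is `∨` if `g = true` and `∧` otherwise. -/
def andOr : (d : ℕ) → Bool → (Fin (2 ^ d) → Bool) → Bool
  | 0, _, x => x ⟨0, by norm_num⟩
  | d + 1, g, x =>
      (fun L R => if g then L || R else L && R)
        (andOr d (!g) fun i => x ⟨i.val, by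
          have h := i.isLt
          have h2 : 2 ^ (d + 1) = 2 ^ d + 2 ^ d := by rw [pow_succ]; omega
          omega⟩)
        (andOr d (!g) fun i => x ⟨2 ^ d + i.val, by
          have h := i.isLt
          have h2 : 2 ^ (d + 1) = 2 ^ d + 2 ^ d := by rw [pow_succ]; omega
          omega⟩)

/-- The complete binary AND-OR tree function `F : {0,1}^(4^k) → {0,1}`: the
complete binary formula of depth `log₂ (4^k) = 2k` with root gate `∨`,
alternating gate layers, and the `4^k` distinct variables at the leaves. -/
def andOrTreeFn (k : ℕ) : (Fin (4 ^ k) → Bool) → Bool :=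
  fun x => andOr (2 * k) true fun i => x (Fin.cast (by rw [pow_mul]; norm_num) i)

/-- `rank(f)`: the minimum rank of a decision tree computing `f`. -/
noncomputable def rankFn {n : ℕ} (f : (Fin n → Bool) → Bool) : ℕ :=
  sInf {r : ℕ | ∃ t : DTree n, ComputesFn t f ∧ t.rank = r}

/-!
The decision tree evaluates the formula left to right with short-circuiting: to decide
`L ∨ R` it first decides `L`, answers `1` if `L` holds and otherwise goes on to decide `R`
(dually for `∧`). Building the tree with two continuation trees `t₀, t₁` for the outcomes
`0, 1`, its rank is `max (rank t₀ + p) (rank t₁ + q)` for an `∨`-rooted formula of depth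
`d + 1` (with `p` and `q` swapped for `∧`), where `(p, q) = (0, 1)` at depth `1` and
`(p, q) ↦ (2q, p + q)` at each further level. At depth `2k` this gives
`p = (4^k + 2)/3 ≥ q = (4^k - 1)/3`.
-/

def Fin.leftHalf {d : ℕ} (i : Fin (2 ^ d)) : Fin (2 ^ (d + 1)) :=
  ⟨i.val, by have := i.isLt; rw [pow_succ]; omega⟩

def Fin.rightHalf {d : ℕ} (i : Fin (2 ^ d)) : Fin (2 ^ (d + 1)) :=
  ⟨2 ^ d + i.val, by have := i.isLt; rw [pow_succ]; omega⟩

theorem andOr_succ_true (d : ℕ) (x : Fin (2 ^ (d + 1)) → Bool) :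
    andOr (d + 1) true x =
      (andOr d false (x ∘ Fin.leftHalf) || andOr d false (x ∘ Fin.rightHalf)) :=
  rfl

theorem andOr_succ_false (d : ℕ) (x : Fin (2 ^ (d + 1)) → Bool) :
    andOr (d + 1) false x =
      (andOr d true (x ∘ Fin.leftHalf) && andOr d true (x ∘ Fin.rightHalf)) :=
  rfl

namespace DTree

variable {n : ℕ}

def branchOnAndOr :
    (d : ℕ) → Bool → (Fin (2 ^ d) → Fin n) → DTree n → DTree n → DTree n
  | 0, _, emb, t₀, t₁ => node (emb ⟨0, by norm_num⟩) t₀ t₁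
  | d + 1, true, emb, t₀, t₁ =>
      branchOnAndOr d false (emb ∘ Fin.leftHalf)
        (branchOnAndOr d false (emb ∘ Fin.rightHalf) t₀ t₁) t₁
  | d + 1, false, emb, t₀, t₁ =>
      branchOnAndOr d true (emb ∘ Fin.leftHalf) t₀
        (branchOnAndOr d true (emb ∘ Fin.rightHalf) t₀ t₁)

theorem eval_branchOnAndOr (d : ℕ) (g : Bool) (emb : Fin (2 ^ d) → Fin n) (t₀ t₁ : DTree n)
    (x : Fin n → Bool) :
    (branchOnAndOr d g emb t₀ t₁).eval x =
      if andOr d g (x ∘ emb) then t₁.eval x else t₀.eval x := by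
  induction d generalizing g t₀ t₁ with
  | zero => rfl
  | succ d ih =>
    cases g <;> simp only [branchOnAndOr, ih, andOr_succ_true, andOr_succ_false,
      Function.comp_assoc, Bool.and_eq_true, Bool.or_eq_true, ite_and, ite_or]

def andOrRankCost : ℕ → ℕ × ℕ
  | 0 => (0, 1)
  | d + 1 => (2 * (andOrRankCost d).2, (andOrRankCost d).1 + (andOrRankCost d).2)

theorem rank_branchOnAndOr_succ (d : ℕ) (g : Bool) (emb : Fin (2 ^ (d + 1)) → Fin n)
    (t₀ t₁ : DTree n) :
    (branchOnAndOr (d + 1) g emb t₀ t₁).rank =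
      if g then max (t₀.rank + (andOrRankCost d).1) (t₁.rank + (andOrRankCost d).2)
      else max (t₀.rank + (andOrRankCost d).2) (t₁.rank + (andOrRankCost d).1) := by
  induction d generalizing g t₀ t₁ with
  | zero =>
    cases g <;> simp only [branchOnAndOr, rank, andOrRankCost, Bool.false_eq_true, ↓reduceIte] <;>
      split_ifs <;> omega
  | succ d ih =>
    cases g
    · rw [branchOnAndOr.eq_3, ih, ih]
      simp only [andOrRankCost, Bool.false_eq_true, ↓reduceIte]
      omega
    · rw [branchOnAndOr.eq_2, ih, ih]
      simp only [andOrRankCost, Bool.false_eq_true, ↓reduceIte]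
      omega

theorem computesFn_branchOnAndOr (d : ℕ) (g : Bool) (emb : Fin (2 ^ d) → Fin n) :
    ComputesFn (branchOnAndOr d g emb (leaf false) (leaf true)) fun x => andOr d g (x ∘ emb) := by
  intro x
  rw [eval_branchOnAndOr]
  beta_reduce
  cases andOr d g (x ∘ emb) <;> rfl

theorem andOrRankCost_two_mul_add_one (k : ℕ) :
    3 * (andOrRankCost (2 * k + 1)).1 = 4 ^ (k + 1) + 2 ∧
      3 * (andOrRankCost (2 * k + 1)).2 + 1 = 4 ^ (k + 1) := by
  induction k with
  | zero => decide
  | succ k ih =>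
    rw [show 2 * (k + 1) + 1 = 2 * k + 1 + 1 + 1 by ring, pow_succ,
      andOrRankCost.eq_2 (2 * k + 1 + 1), andOrRankCost.eq_2 (2 * k + 1)]
    omega

theorem three_mul_rank_branchOnAndOr_le (k : ℕ) (emb : Fin (2 ^ (2 * k)) → Fin n) :
    3 * (branchOnAndOr (2 * k) true emb (leaf false) (leaf true)).rank ≤ 4 ^ k + 2 := by
  cases k with
  | zero => exact le_rfl
  | succ k =>
    change 3 * (branchOnAndOr (2 * k + 1 + 1) true emb _ _).rank ≤ _
    rw [rank_branchOnAndOr_succ]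
    obtain ⟨hp, hq⟩ := andOrRankCost_two_mul_add_one k
    simp only [rank, ↓reduceIte]
    omega

end DTree

theorem rank_andOrTreeFn_upper_general (k : ℕ) :
    ∃ t : DTree (4 ^ k), ComputesFn t (andOrTreeFn k) ∧ 3 * t.rank ≤ 4 ^ k + 2 := by
  have hpow : 2 ^ (2 * k) = 4 ^ k := by rw [pow_mul]; norm_num
  exact ⟨.branchOnAndOr (2 * k) true (Fin.cast hpow) (.leaf false) (.leaf true),
    DTree.computesFn_branchOnAndOr _ _ _, DTree.three_mul_rank_branchOnAndOr_le k _⟩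

/-- For every `n = 4^k` (`k ≥ 1`), there exists a deterministic
decision tree computing the complete binary AND-OR tree function
`F : {0,1}^n → {0,1}` whose rank is at most `(n + 2) / 3`;
i.e. `rank(F) ≤ (n + 2) / 3`. -/
theorem rank_andOrTreeFn_upper (k : ℕ) (hk : 1 ≤ k) :
    ∃ t : DTree (4 ^ k), ComputesFn t (andOrTreeFn k) ∧ 3 * t.rank ≤ 4 ^ k + 2 :=
  rank_andOrTreeFn_upper_general k
end

section
/- Let T be a decision tree whose root is an internal node, and let T_L and T_R be the subtrees rooted at the two children of the root. Then OPT_T ≤ (OPT_{T_L} + OPT_{T_R} + sqrt((OPT_{T_L} − OPT_{T_R})² + 4)) / 2. -/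
/-- An assignment of one real weight to each edge of a binary tree, recorded as a
tree of the same shape: at every internal node, `w0` is the weight of the edge to
the 0-child and `w1` the weight of the edge to the 1-child. -/
inductive WTree : Type where
  | leaf : WTree
  | node (w0 w1 : ℝ) (c0 c1 : WTree) : WTree

namespace WTree

/-- All weights are strictly positive. -/
def Pos : WTree → Prop
  | leaf => True
  | node w0 w1 c0 c1 => 0 < w0 ∧ 0 < w1 ∧ c0.Pos ∧ c1.Pos

/-- `max_{P ∈ P(T)} Σ_{e ∈ P} 1 / W_e`: the maximum over root-to-leaf paths `P`
of the sum of the inverse weights of the edges along `P`. -/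
noncomputable def pathCost : WTree → ℝ
  | leaf => 0
  | node w0 w1 c0 c1 => max (1 / w0 + c0.pathCost) (1 / w1 + c1.pathCost)

/-- `max_{P ∈ P(T)} Σ_{e ∈ P̄} W_e`: the maximum over root-to-leaf paths `P` of
the sum of the weights of the edges having exactly one endpoint on `P`
(i.e. at each internal node of `P`, the edge to the child off the path). -/
noncomputable def devCost : WTree → ℝ
  | leaf => 0
  | node w0 w1 c0 c1 => max (w1 + c0.devCost) (w0 + c1.devCost)

end WTree

namespace WTree

def scale (c : ℝ) : WTree → WTree
  | leaf => leaf
  | node w0 w1 c0 c1 => node (c * w0) (c * w1) (scale c c0) (scale c c1)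

lemma pos_scale {c : ℝ} (hc : 0 < c) : ∀ {w : WTree}, w.Pos → (w.scale c).Pos
  | leaf, _ => trivial
  | node w0 w1 c0 c1, ⟨h0, h1, p0, p1⟩ =>
      ⟨mul_pos hc h0, mul_pos hc h1, pos_scale hc p0, pos_scale hc p1⟩

lemma devCost_nonneg : ∀ {w : WTree}, w.Pos → 0 ≤ w.devCost
  | leaf, _ => le_of_eq rfl
  | node w0 w1 c0 c1, ⟨h0, h1, p0, p1⟩ =>
      le_max_of_le_left (by have := devCost_nonneg p0; linarith)

lemma pathCost_nonneg : ∀ {w : WTree}, w.Pos → 0 ≤ w.pathCost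
  | leaf, _ => le_of_eq rfl
  | node w0 w1 c0 c1, ⟨h0, h1, p0, p1⟩ =>
      le_max_of_le_left (by have := pathCost_nonneg p0; positivity)

lemma devCost_pos : ∀ {w0 w1 : ℝ} {c0 c1 : WTree}, (node w0 w1 c0 c1).Pos →
    0 < (node w0 w1 c0 c1).devCost := fun {w0 w1 c0 c1} ⟨h0, h1, p0, p1⟩ =>
  lt_max_of_lt_left (by have := devCost_nonneg p0; linarith)

lemma pathCost_pos : ∀ {w0 w1 : ℝ} {c0 c1 : WTree}, (node w0 w1 c0 c1).Pos →
    0 < (node w0 w1 c0 c1).pathCost := fun {w0 w1 c0 c1} ⟨h0, h1, p0, p1⟩ =>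
  lt_max_of_lt_left (by have := pathCost_nonneg p0; positivity)

lemma devCost_scale {c : ℝ} (hc : 0 ≤ c) : ∀ w : WTree, (w.scale c).devCost = c * w.devCost
  | leaf => by simp [scale, devCost]
  | node w0 w1 c0 c1 => by
      simp only [scale, devCost, devCost_scale hc c0, devCost_scale hc c1,
        ← mul_add]
      exact (mul_max_of_nonneg _ _ hc).symm

lemma pathCost_scale {c : ℝ} (hc : 0 ≤ c) : ∀ w : WTree, (w.scale c).pathCost = c⁻¹ * w.pathCost
  | leaf => by simp [scale, pathCost]
  | node w0 w1 c0 c1 => by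
      have h : ∀ x : ℝ, 1 / (c * x) = c⁻¹ * (1 / x) := fun x => by
        rw [one_div, mul_inv, one_div]
      simp only [scale, pathCost, pathCost_scale hc c0, pathCost_scale hc c1,
        h, ← mul_add]
      exact (mul_max_of_nonneg _ _ (inv_nonneg.mpr hc)).symm

end WTree

/-- The weight assignment `w` has the same shape as the decision tree `t`
(i.e. it assigns a weight to each edge of `t`). -/
def MatchesW {n : ℕ} : DTree n → WTree → Prop
  | DTree.leaf _, WTree.leaf => True
  | DTree.node _ t0 t1, WTree.node _ _ c0 c1 => MatchesW t0 c0 ∧ MatchesW t1 c1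
  | _, _ => False

/-- `OPT_T`: the infimum, over all positive weight assignments `W` to the edges
of `T`, of `sqrt((max_{P} Σ_{e∈P̄} W_e) · (max_{P} Σ_{e∈P} 1/W_e))`.
For a single leaf this is `0`. -/
noncomputable def OPT {n : ℕ} (t : DTree n) : ℝ :=
  sInf {v : ℝ | ∃ w : WTree, MatchesW t w ∧ w.Pos ∧
    v = Real.sqrt (w.devCost * w.pathCost)}


lemma matchesW_scale {n : ℕ} (c : ℝ) :
    ∀ (t : DTree n) (w : WTree), MatchesW t w → MatchesW t (w.scale c)
  | DTree.leaf _, WTree.leaf, _ => trivial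
  | DTree.node _ t0 t1, WTree.node w0 w1 c0 c1, ⟨h0, h1⟩ =>
      ⟨matchesW_scale c t0 c0 h0, matchesW_scale c t1 c1 h1⟩
  | DTree.leaf _, WTree.node _ _ _ _, h => h.elim
  | DTree.node _ _ _, WTree.leaf, h => h.elim

def DTree.ones {n : ℕ} : DTree n → WTree
  | DTree.leaf _ => WTree.leaf
  | DTree.node _ t0 t1 => WTree.node 1 1 t0.ones t1.ones

lemma matchesW_ones {n : ℕ} : ∀ t : DTree n, MatchesW t t.ones
  | DTree.leaf _ => trivial
  | DTree.node _ t0 t1 => ⟨matchesW_ones t0, matchesW_ones t1⟩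

lemma pos_ones {n : ℕ} : ∀ t : DTree n, t.ones.Pos
  | DTree.leaf _ => trivial
  | DTree.node _ t0 t1 => ⟨one_pos, one_pos, pos_ones t0, pos_ones t1⟩

lemma OPTset_nonempty {n : ℕ} (t : DTree n) :
    {v : ℝ | ∃ w : WTree, MatchesW t w ∧ w.Pos ∧
      v = Real.sqrt (w.devCost * w.pathCost)}.Nonempty :=
  ⟨_, t.ones, matchesW_ones t, pos_ones t, rfl⟩

lemma OPT_nonneg {n : ℕ} (t : DTree n) : 0 ≤ OPT t :=
  Real.sInf_nonneg (by rintro v ⟨w, _, _, rfl⟩; exact Real.sqrt_nonneg _)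

lemma exists_good {n : ℕ} (t : DTree n) {ε : ℝ} (hε : 0 < ε) :
    ∃ w : WTree, MatchesW t w ∧ w.Pos ∧
      w.devCost ≤ OPT t + ε ∧ w.pathCost ≤ OPT t + ε := by
  obtain ⟨v, ⟨w, hm, hp, rfl⟩, hv⟩ := Real.lt_sInf_add_pos (OPTset_nonempty t) hε
  rw [← OPT] at hv
  match w, hp with
  | WTree.leaf, _ =>
      refine ⟨WTree.leaf, hm, trivial, ?_, ?_⟩ <;>
        · show (0:ℝ) ≤ _
          have := OPT_nonneg t
          linarith
  | WTree.node w0 w1 c0 c1, hp =>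
      set W : WTree := WTree.node w0 w1 c0 c1 with hW
      have hd : 0 < W.devCost := WTree.devCost_pos hp
      have hq : 0 < W.pathCost := WTree.pathCost_pos hp
      set c : ℝ := Real.sqrt (W.pathCost / W.devCost) with hc
      have hcpos : 0 < c := Real.sqrt_pos.mpr (div_pos hq hd)
      refine ⟨W.scale c, matchesW_scale c t W hm, WTree.pos_scale hcpos hp, ?_, ?_⟩
      · rw [WTree.devCost_scale hcpos.le]
        have : c * W.devCost = Real.sqrt (W.devCost * W.pathCost) := by
          rw [hc, show W.pathCost / W.devCost = (W.devCost * W.pathCost) / W.devCost ^ 2 by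
            field_simp, Real.sqrt_div' _ (by positivity), Real.sqrt_sq hd.le]
          field_simp
        rw [this]; linarith
      · rw [WTree.pathCost_scale hcpos.le]
        have : c⁻¹ * W.pathCost = Real.sqrt (W.devCost * W.pathCost) := by
          rw [hc, ← Real.sqrt_inv, inv_div,
            show W.devCost / W.pathCost = (W.devCost * W.pathCost) / W.pathCost ^ 2 by
              field_simp, Real.sqrt_div' _ (by positivity), Real.sqrt_sq hq.le]
          field_simp
        rw [this]; linarith

/-- Let `T` be a decision tree whose root is an internal node,
with subtrees `T_L`, `T_R` rooted at the two children of the root. Then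
`OPT_T ≤ (OPT_{T_L} + OPT_{T_R} + sqrt((OPT_{T_L} − OPT_{T_R})² + 4)) / 2`. -/
theorem OPT_node_le {n : ℕ} (i : Fin n) (tL tR : DTree n) :
    OPT (DTree.node i tL tR) ≤
      (OPT tL + OPT tR + Real.sqrt ((OPT tL - OPT tR) ^ 2 + 4)) / 2 := by
  set a := OPT tL with ha'
  set b := OPT tR with hb'
  set s := Real.sqrt ((a - b) ^ 2 + 4) with hs'
  have ha : 0 ≤ a := OPT_nonneg tL
  have hb : 0 ≤ b := OPT_nonneg tR
  have hs0 : 0 ≤ s := Real.sqrt_nonneg _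
  have hs2 : s ^ 2 = (a - b) ^ 2 + 4 := Real.sq_sqrt (by positivity)
  set φ : ℝ := (a + b + s) / 2 with hφ'
  have hφa : a < φ := by rw [hφ']; nlinarith
  have hφb : b < φ := by rw [hφ']; nlinarith
  have hkey : (φ - a) * (φ - b) = 1 := by rw [hφ']; nlinarith
  apply le_of_forall_pos_le_add
  intro ε hε
  obtain ⟨wL, hmL, hpL, hdL, hqL⟩ := exists_good tL hε
  obtain ⟨wR, hmR, hpR, hdR, hqR⟩ := exists_good tR hε
  rw [← ha'] at hdL hqL
  rw [← hb'] at hdR hqR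
  set ψ : ℝ := φ + ε with hψ'
  have hw0 : 0 < ψ - wR.devCost := by
    have := WTree.devCost_nonneg hpR; linarith
  have hw1 : 0 < ψ - wL.devCost := by
    have := WTree.devCost_nonneg hpL; linarith
  set W : WTree := WTree.node (ψ - wR.devCost) (ψ - wL.devCost) wL wR with hWdef
  have hmem : Real.sqrt (W.devCost * W.pathCost) ∈
      {v : ℝ | ∃ w : WTree, MatchesW (DTree.node i tL tR) w ∧ w.Pos ∧
        v = Real.sqrt (w.devCost * w.pathCost)} :=
    ⟨W, ⟨hmL, hmR⟩, ⟨hw0, hw1, hpL, hpR⟩, rfl⟩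
  have hbdd : BddBelow {v : ℝ | ∃ w : WTree, MatchesW (DTree.node i tL tR) w ∧ w.Pos ∧
      v = Real.sqrt (w.devCost * w.pathCost)} :=
    ⟨0, by rintro v ⟨w, _, _, rfl⟩; exact Real.sqrt_nonneg _⟩
  have h1 : OPT (DTree.node i tL tR) ≤ Real.sqrt (W.devCost * W.pathCost) :=
    csInf_le hbdd hmem
  have hψpos : 0 < ψ := by rw [hψ', hφ']; nlinarith
  have hD : W.devCost = ψ := by
    rw [hWdef]
    show max ((ψ - wL.devCost) + wL.devCost) ((ψ - wR.devCost) + wR.devCost) = ψ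
    rw [sub_add_cancel, sub_add_cancel, max_self]
  have hP : W.pathCost ≤ ψ := by
    rw [hWdef]
    show max (1 / (ψ - wR.devCost) + wL.pathCost) (1 / (ψ - wL.devCost) + wR.pathCost) ≤ ψ
    apply max_le
    · have h2 : 1 / (ψ - wR.devCost) ≤ φ - a := by
        rw [div_le_iff₀ hw0]; nlinarith
      rw [hψ']; linarith
    · have h2 : 1 / (ψ - wL.devCost) ≤ φ - b := by
        rw [div_le_iff₀ hw1]; nlinarith
      rw [hψ']; linarith
  have h3 : Real.sqrt (W.devCost * W.pathCost) ≤ ψ := by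
    calc Real.sqrt (W.devCost * W.pathCost) ≤ Real.sqrt (ψ * ψ) := by
          apply Real.sqrt_le_sqrt
          rw [hD]
          exact mul_le_mul_of_nonneg_left hP hψpos.le
      _ = ψ := Real.sqrt_mul_self hψpos.le
  rw [hψ'] at h3
  linarith
end

section
/- Let T be a decision tree with at least one internal node. For each internal node v of T with child u along edge e, define the weight W'_e = 1 / log₂( DTSize(T_v) / DTSize(T_u) ), where T_w denotes the subtree of T rooted at w and DTSize is the number of nodes (note DTSize(T_v) > DTSize(T_u), so W'_e > 0). Then for every root-to-leaf path P of T, the sum of W'_e over all edges e having exactly one endpoint on P is at most 2 · DTSize(T); moreover, for every root-to-leaf path P, Σ_{e∈P} 1/W'_e = log₂ DTSize(T). -/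
/-- The weight assignment `W'` of Appendix B: the edge from an internal node `v`
to its child `u` gets weight `W'_e = 1 / log₂(DTSize(T_v) / DTSize(T_u))`. -/
noncomputable def sizeWeight {n : ℕ} : DTree n → WTree
  | DTree.leaf _ => WTree.leaf
  | DTree.node _ t0 t1 =>
      WTree.node
        (1 / Real.logb 2 (((1 + t0.size + t1.size : ℕ) : ℝ) / (t0.size : ℝ)))
        (1 / Real.logb 2 (((1 + t0.size + t1.size : ℕ) : ℝ) / (t1.size : ℝ)))
        (sizeWeight t0) (sizeWeight t1)

/-- `p` is a root-to-leaf path of the decision tree (recorded as the list of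
directions taken at each internal node). -/
def IsLeafPath {n : ℕ} : DTree n → List Bool → Prop
  | DTree.leaf _, [] => True
  | DTree.node _ t0 _, false :: p => IsLeafPath t0 p
  | DTree.node _ _ t1, true :: p => IsLeafPath t1 p
  | _, _ => False

/-- `Σ_{e ∈ P} 1 / W_e`: the sum of the inverse weights of the edges along the
root-to-leaf path `P`. -/
noncomputable def pathSum : WTree → List Bool → ℝ
  | WTree.node w0 _ c0 _, false :: p => 1 / w0 + pathSum c0 p
  | WTree.node _ w1 _ c1, true :: p => 1 / w1 + pathSum c1 p
  | _, _ => 0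

/-- `Σ_{e ∈ P̄} W_e`: the sum of the weights of the edges having exactly one
endpoint on the root-to-leaf path `P` (at each internal node of `P`, the edge to
the child off the path). -/
noncomputable def devSum : WTree → List Bool → ℝ
  | WTree.node _ w1 c0 _, false :: p => w1 + devSum c0 p
  | WTree.node w0 _ _ c1, true :: p => w0 + devSum c1 p
  | _, _ => 0

lemma DTree.one_le_size {n : ℕ} (t : DTree n) : 1 ≤ t.size := by
  cases t <;> simp [DTree.size] <;> omega

lemma weight_le (s u : ℕ) (hu : 0 < u) (hus : u < s) :
    1 / Real.logb 2 ((s : ℝ) / u) ≤ (s : ℝ) / ((s : ℝ) - u) := by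
  have hu' : (0 : ℝ) < u := by exact_mod_cast hu
  have hus' : (u : ℝ) < s := by exact_mod_cast hus
  have hs' : (0 : ℝ) < s := lt_trans hu' hus'
  have hx : (1 : ℝ) < (s : ℝ) / u := (one_lt_div hu').2 hus'
  have hlogx : 0 < Real.log ((s : ℝ) / u) := Real.log_pos hx
  have hlb : ((s : ℝ) - u) / s ≤ Real.log ((s : ℝ) / u) := by
    have h := Real.log_le_sub_one_of_pos (x := (u : ℝ) / s) (by positivity)
    have hinv : Real.log ((u : ℝ) / s) = - Real.log ((s : ℝ) / u) := by
      rw [← Real.log_inv]; congr 1; field_simp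
    rw [hinv] at h
    have : (u : ℝ) / s - 1 = -(((s : ℝ) - u) / s) := by field_simp; ring
    linarith [this ▸ h]
  have hlog2 : Real.log 2 ≤ 1 := by
    have := Real.log_le_sub_one_of_pos (x := (2 : ℝ)) (by norm_num)
    linarith
  have h1 : 1 / Real.logb 2 ((s : ℝ) / u)
      = Real.log 2 / Real.log ((s : ℝ) / u) := by
    rw [Real.logb, one_div_div]
  rw [h1]
  have h2 : Real.log 2 / Real.log ((s : ℝ) / u)
      ≤ 1 / Real.log ((s : ℝ) / u) := by gcongr
  have h3 : 1 / Real.log ((s : ℝ) / u) ≤ 1 / (((s : ℝ) - u) / s) := by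
    gcongr
  have h4 : 1 / (((s : ℝ) - u) / s) = (s : ℝ) / ((s : ℝ) - u) := by
    rw [one_div_div]
  linarith [h4 ▸ h3]

lemma devSum_sizeWeight_le {n : ℕ} :
    ∀ (t : DTree n) (p : List Bool), IsLeafPath t p →
      devSum (sizeWeight t) p ≤ 2 * (t.size : ℝ)
  | DTree.leaf b, [], _ => by simp [sizeWeight, devSum, DTree.size]
  | DTree.leaf b, (x :: p), hp => by cases hp
  | DTree.node i t0 t1, [], hp => by cases hp
  | DTree.node i t0 t1, (false :: p), hp => by
    have ih := devSum_sizeWeight_le t0 p hp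
    have h0 : 1 ≤ t0.size := t0.one_le_size
    have h1 : 1 ≤ t1.size := t1.one_le_size
    have hw := weight_le (1 + t0.size + t1.size) t1.size (by omega) (by omega)
    have hc : ((1 + t0.size + t1.size : ℕ) : ℝ) - (t1.size : ℝ)
        = 1 + (t0.size : ℝ) := by push_cast; ring
    rw [hc] at hw
    have h0' : (1 : ℝ) ≤ (t0.size : ℝ) := by exact_mod_cast h0
    have h1' : (1 : ℝ) ≤ (t1.size : ℝ) := by exact_mod_cast h1
    have hfrac : ((1 + t0.size + t1.size : ℕ) : ℝ) / (1 + (t0.size : ℝ))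
        ≤ 1 + (t1.size : ℝ) := by
      rw [div_le_iff₀ (by linarith)]
      push_cast
      nlinarith
    show 1 / Real.logb 2 (((1 + t0.size + t1.size : ℕ) : ℝ) / (t1.size : ℝ))
        + devSum (sizeWeight t0) p ≤ 2 * ((DTree.node i t0 t1).size : ℝ)
    have : ((DTree.node i t0 t1).size : ℝ) = 1 + (t0.size : ℝ) + (t1.size : ℝ) := by
      simp [DTree.size]
    rw [this]
    linarith
  | DTree.node i t0 t1, (true :: p), hp => by
    have ih := devSum_sizeWeight_le t1 p hp
    have h0 : 1 ≤ t0.size := t0.one_le_size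
    have h1 : 1 ≤ t1.size := t1.one_le_size
    have hw := weight_le (1 + t0.size + t1.size) t0.size (by omega) (by omega)
    have hc : ((1 + t0.size + t1.size : ℕ) : ℝ) - (t0.size : ℝ)
        = 1 + (t1.size : ℝ) := by push_cast; ring
    rw [hc] at hw
    have h0' : (1 : ℝ) ≤ (t0.size : ℝ) := by exact_mod_cast h0
    have h1' : (1 : ℝ) ≤ (t1.size : ℝ) := by exact_mod_cast h1
    have hfrac : ((1 + t0.size + t1.size : ℕ) : ℝ) / (1 + (t1.size : ℝ))
        ≤ 1 + (t0.size : ℝ) := by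
      rw [div_le_iff₀ (by linarith)]
      push_cast
      nlinarith
    show 1 / Real.logb 2 (((1 + t0.size + t1.size : ℕ) : ℝ) / (t0.size : ℝ))
        + devSum (sizeWeight t1) p ≤ 2 * ((DTree.node i t0 t1).size : ℝ)
    have : ((DTree.node i t0 t1).size : ℝ) = 1 + (t0.size : ℝ) + (t1.size : ℝ) := by
      simp [DTree.size]
    rw [this]
    linarith

lemma pathSum_sizeWeight_eq {n : ℕ} :
    ∀ (t : DTree n) (p : List Bool), IsLeafPath t p →
      pathSum (sizeWeight t) p = Real.logb 2 (t.size : ℝ)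
  | DTree.leaf b, [], _ => by simp [sizeWeight, pathSum, DTree.size]
  | DTree.leaf b, (x :: p), hp => by cases hp
  | DTree.node i t0 t1, [], hp => by cases hp
  | DTree.node i t0 t1, (false :: p), hp => by
    have ih := pathSum_sizeWeight_eq t0 p hp
    have h0 : (0 : ℝ) < (t0.size : ℝ) := by
      exact_mod_cast Nat.lt_of_lt_of_le Nat.zero_lt_one t0.one_le_size
    have hs : (0 : ℝ) < ((1 + t0.size + t1.size : ℕ) : ℝ) := by positivity
    show 1 / (1 / Real.logb 2 (((1 + t0.size + t1.size : ℕ) : ℝ) / (t0.size : ℝ)))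
        + pathSum (sizeWeight t0) p = Real.logb 2 ((DTree.node i t0 t1).size : ℝ)
    rw [one_div_one_div, ih,
      Real.logb_div (ne_of_gt hs) (ne_of_gt h0)]
    have : ((DTree.node i t0 t1).size : ℝ) = ((1 + t0.size + t1.size : ℕ) : ℝ) := by
      simp [DTree.size]
    rw [this]; ring
  | DTree.node i t0 t1, (true :: p), hp => by
    have ih := pathSum_sizeWeight_eq t1 p hp
    have h1 : (0 : ℝ) < (t1.size : ℝ) := by
      exact_mod_cast Nat.lt_of_lt_of_le Nat.zero_lt_one t1.one_le_size
    have hs : (0 : ℝ) < ((1 + t0.size + t1.size : ℕ) : ℝ) := by positivity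
    show 1 / (1 / Real.logb 2 (((1 + t0.size + t1.size : ℕ) : ℝ) / (t1.size : ℝ)))
        + pathSum (sizeWeight t1) p = Real.logb 2 ((DTree.node i t0 t1).size : ℝ)
    rw [one_div_one_div, ih,
      Real.logb_div (ne_of_gt hs) (ne_of_gt h1)]
    have : ((DTree.node i t0 t1).size : ℝ) = ((1 + t0.size + t1.size : ℕ) : ℝ) := by
      simp [DTree.size]
    rw [this]; ring

/-- Let `T` be a decision tree with at least one internal node
(i.e. whose root is an internal node), weighted by
`W'_e = 1 / log₂(DTSize(T_v) / DTSize(T_u))` for each edge `e` from a node `v` to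
its child `u`. Then for every root-to-leaf path `P` of `T`, the sum of `W'_e`
over all edges having exactly one endpoint on `P` is at most `2 · DTSize(T)`,
and `Σ_{e ∈ P} 1 / W'_e = log₂ DTSize(T)`. -/
theorem sizeWeight_devSum_le_and_pathSum_eq {n : ℕ} (i : Fin n) (t0 t1 : DTree n)
    (p : List Bool) (hp : IsLeafPath (DTree.node i t0 t1) p) :
    devSum (sizeWeight (DTree.node i t0 t1)) p ≤
        2 * ((DTree.node i t0 t1).size : ℝ) ∧
      pathSum (sizeWeight (DTree.node i t0 t1)) p =
        Real.logb 2 (((DTree.node i t0 t1).size : ℕ) : ℝ) := by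
  exact ⟨devSum_sizeWeight_le _ p hp, by
    simpa using pathSum_sizeWeight_eq (DTree.node i t0 t1) p hp⟩
end

section
/- For every decision tree T with at least one internal node, OPT_T ≤ sqrt( 2 · DTSize(T) · log₂ DTSize(T) ); in particular OPT_T = O( sqrt( DTSize(T) · log DTSize(T) ) ). -/
noncomputable def wtOf {n : ℕ} : DTree n → WTree
  | .leaf _ => .leaf
  | .node _ t0 t1 => .node (t0.size : ℝ) (t1.size : ℝ) (wtOf t0) (wtOf t1)

lemma matchesW_wtOf {n : ℕ} (t : DTree n) : MatchesW t (wtOf t) := by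
  induction t with
  | leaf b => trivial
  | node i t0 t1 h0 h1 => exact ⟨h0, h1⟩

lemma pos_wtOf {n : ℕ} (t : DTree n) : (wtOf t).Pos := by
  induction t with
  | leaf b => trivial
  | node i t0 t1 h0 h1 =>
    exact ⟨by exact_mod_cast Nat.lt_of_lt_of_le Nat.zero_lt_one t0.one_le_size,
      by exact_mod_cast Nat.lt_of_lt_of_le Nat.zero_lt_one t1.one_le_size, h0, h1⟩

lemma devCost_wtOf_le {n : ℕ} (t : DTree n) : (wtOf t).devCost ≤ (t.size : ℝ) - 1 := by
  induction t with
  | leaf b => simp [wtOf, WTree.devCost, DTree.size]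
  | node i t0 t1 h0 h1 =>
    simp only [wtOf, WTree.devCost, DTree.size]
    have := t0.one_le_size; have := t1.one_le_size
    apply max_le <;> push_cast <;> linarith

lemma pathCost_wtOf_nonneg {n : ℕ} (t : DTree n) : 0 ≤ (wtOf t).pathCost := by
  induction t with
  | leaf b => simp [wtOf, WTree.pathCost]
  | node i t0 t1 h0 h1 =>
    refine le_trans ?_ (le_max_left _ _)
    have : (0:ℝ) ≤ 1 / (t0.size : ℝ) := by positivity
    linarith

lemma keyineq {a s : ℝ} (ha : 1 ≤ a) (hs : a + 2 ≤ s) :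
    1 / a + 2 * Real.logb 2 a ≤ 2 * Real.logb 2 s := by
  have ha0 : 0 < a := by linarith
  have hl2 : 0 < Real.log 2 := Real.log_pos (by norm_num)
  have hl2' : Real.log 2 ≤ 1 := by
    have := Real.log_le_sub_one_of_pos (by norm_num : (0:ℝ) < 2); linarith
  have hmono : Real.logb 2 (a + 2) ≤ Real.logb 2 s :=
    Real.logb_le_logb_of_le (by norm_num) (by linarith) hs
  have hL : 2 / (a + 2) ≤ Real.log (a + 2) - Real.log a := by
    have h1 : Real.log (a / (a + 2)) ≤ a / (a + 2) - 1 :=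
      Real.log_le_sub_one_of_pos (by positivity)
    have h2 : Real.log (a / (a + 2)) = Real.log a - Real.log (a + 2) :=
      Real.log_div (by linarith) (by linarith)
    have h3 : a / (a + 2) - 1 = -(2 / (a + 2)) := by field_simp; ring
    rw [h2, h3] at h1; linarith
  set L := Real.log (a + 2) - Real.log a with hLdef
  have hgoal : 1 / a ≤ 2 * L / Real.log 2 := by
    rw [div_le_div_iff₀ ha0 hl2]
    have h4 : (1:ℝ) ≤ 4 * a / (a + 2) := by
      rw [le_div_iff₀ (by linarith)]; linarith
    have h5 : 4 * a / (a + 2) = 2 * (2 / (a + 2)) * a := by ring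
    have h6 : 2 * (2 / (a + 2)) * a ≤ 2 * L * a := by nlinarith
    nlinarith
  have hlogb : Real.logb 2 (a + 2) - Real.logb 2 a = L / Real.log 2 := by
    simp [Real.logb, hLdef]; ring
  have : 1 / a ≤ 2 * (Real.logb 2 (a + 2) - Real.logb 2 a) := by
    rw [hlogb, ← mul_div_assoc]; exact hgoal
  linarith

lemma pathCost_wtOf_le {n : ℕ} (t : DTree n) :
    (wtOf t).pathCost ≤ 2 * Real.logb 2 (t.size : ℝ) := by
  induction t with
  | leaf b => simp [wtOf, WTree.pathCost, DTree.size]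
  | node i t0 t1 h0 h1 =>
    simp only [wtOf, WTree.pathCost, DTree.size]
    have hs0 : (1:ℝ) ≤ (t0.size:ℝ) := by exact_mod_cast t0.one_le_size
    have hs1 : (1:ℝ) ≤ (t1.size:ℝ) := by exact_mod_cast t1.one_le_size
    apply max_le
    · refine le_trans (by linarith : 1 / (t0.size:ℝ) + (wtOf t0).pathCost ≤
        1 / (t0.size:ℝ) + 2 * Real.logb 2 (t0.size:ℝ)) ?_
      apply keyineq (by exact_mod_cast hs0)
      push_cast; linarith
    · refine le_trans (by linarith : 1 / (t1.size:ℝ) + (wtOf t1).pathCost ≤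
        1 / (t1.size:ℝ) + 2 * Real.logb 2 (t1.size:ℝ)) ?_
      apply keyineq (by exact_mod_cast hs1)
      push_cast; linarith

/-- For every decision tree `T` with at least one internal node
(i.e. whose root is an internal node),
`OPT_T ≤ sqrt(2 · DTSize(T) · log₂ DTSize(T))`. -/
theorem OPT_le_sqrt_size_log_size {n : ℕ} (i : Fin n) (tL tR : DTree n) :
    OPT (DTree.node i tL tR) ≤
      Real.sqrt (2 * ((DTree.node i tL tR).size : ℝ) *
        Real.logb 2 (((DTree.node i tL tR).size : ℕ) : ℝ)) := by
  
  set t : DTree n := DTree.node i tL tR with ht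
  have hs3 : 3 ≤ t.size := by
    have := tL.one_le_size; have := tR.one_le_size
    simp only [ht, DTree.size]; omega
  have hsR : (1:ℝ) ≤ (t.size : ℝ) := by exact_mod_cast le_trans (by norm_num) hs3
  have hbdd : BddBelow {v : ℝ | ∃ w : WTree, MatchesW t w ∧ w.Pos ∧
      v = Real.sqrt (w.devCost * w.pathCost)} := by
    refine ⟨0, fun v hv => ?_⟩
    obtain ⟨w, _, _, hv⟩ := hv
    rw [hv]; exact Real.sqrt_nonneg _
  have hmem : Real.sqrt ((wtOf t).devCost * (wtOf t).pathCost) ∈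
      {v : ℝ | ∃ w : WTree, MatchesW t w ∧ w.Pos ∧
      v = Real.sqrt (w.devCost * w.pathCost)} :=
    ⟨wtOf t, matchesW_wtOf t, pos_wtOf t, rfl⟩
  refine le_trans (csInf_le hbdd hmem) (Real.sqrt_le_sqrt ?_)
  have h1 : (wtOf t).devCost ≤ (t.size : ℝ) := le_trans (devCost_wtOf_le t) (by linarith)
  have h2 := pathCost_wtOf_le t
  have h3 := pathCost_wtOf_nonneg t
  calc (wtOf t).devCost * (wtOf t).pathCost
      ≤ (t.size : ℝ) * (2 * Real.logb 2 (t.size : ℝ)) :=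
        mul_le_mul h1 h2 h3 (by linarith)
    _ = 2 * (t.size : ℝ) * Real.logb 2 ((t.size : ℕ) : ℝ) := by push_cast; ring
end
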